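/- Suppose the two group Bayes classifiers coincide, T*_0 = T*_1 =: T̂, where T*_a = {x : p_{a,1}·f_{a,1}(x) ≥ p_{a,0}·f_{a,0}(x)}, and suppose the data unfairness vanishes, i.e., TPR_0(T*_0) = TPR_1(T*_1) and TNR_0(T*_0) = TNR_1(T*_1). Then the classifier T̂ achieves complete fairness and maximal accuracy: F_U(T̂) = 0 and Acc(T̂) ≥ Acc(T) for every classifier T. -/

import Mathlib

open MeasureTheory

/-- True positive rate of group `a` under classifier `T`: `TPR_a(T) = ∫_T f_{a,1} dν`. -/
noncomputable def tprOf {Ω : Type*} [MeasurableSpace Ω] (ν : Measure Ω)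
    (f : Bool → Bool → Ω → ℝ) (a : Bool) (T : Set Ω) : ℝ :=
  ∫ x in T, f a true x ∂ν

/-- True negative rate of group `a` under classifier `T`: `TNR_a(T) = ∫_{Tᶜ} f_{a,0} dν`. -/
noncomputable def tnrOf {Ω : Type*} [MeasurableSpace Ω] (ν : Measure Ω)
    (f : Bool → Bool → Ω → ℝ) (a : Bool) (T : Set Ω) : ℝ :=
  ∫ x in Tᶜ, f a false x ∂ν

/-- Equalized-odds unfairness. -/
noncomputable def unfairness {Ω : Type*} [MeasurableSpace Ω] (ν : Measure Ω)
    (f : Bool → Bool → Ω → ℝ) (T : Set Ω) : ℝ :=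
  (1/2) * |tprOf ν f true T - tprOf ν f false T|
    + (1/2) * |tnrOf ν f true T - tnrOf ν f false T|

/-- Accuracy of a classifier `T`. -/
noncomputable def accuracy {Ω : Type*} [MeasurableSpace Ω] (ν : Measure Ω)
    (f : Bool → Bool → Ω → ℝ) (p : Bool → Bool → ℝ) (T : Set Ω) : ℝ :=
  (1/2) * (p false true * ∫ x in T, f false true x ∂ν
      + p true true * ∫ x in T, f true true x ∂ν)
  + (1/2) * (p false false * ∫ x in Tᶜ, f false false x ∂ν
      + p true false * ∫ x in Tᶜ, f true false x ∂ν)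

/-!
Accuracy is affine in `∫_T m`, where `m = Σ_a (p_{a,1} f_{a,1} - p_{a,0} f_{a,0})`. When both
group Bayes classifiers equal `T̂`, every summand of `m` is nonnegative on `T̂` and negative off
it, so `T̂` maximizes `∫_T m` over all `T`. Fairness of `T̂` is just the vanishing data
unfairness read at `T̂`.
-/

theorem setIntegral_le_setIntegral_of_nonneg_of_nonpos_compl {α : Type*} [MeasurableSpace α]
    {μ : Measure α} {g : α → ℝ} {S : Set α} (T : Set α) (hg : Integrable g μ)
    (hS : MeasurableSet S) (hg_pos : ∀ x ∈ S, 0 ≤ g x) (hg_neg : ∀ x ∉ S, g x ≤ 0) :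
    ∫ x in T, g x ∂μ ≤ ∫ x in S, g x ∂μ := by
  have hgS : Integrable (S.indicator g) μ := hg.indicator hS
  have hg_le : g ≤ S.indicator g := fun x => by
    by_cases hx : x ∈ S
    · rw [Set.indicator_of_mem hx]
    · rw [Set.indicator_of_notMem hx]; exact hg_neg x hx
  calc ∫ x in T, g x ∂μ ≤ ∫ x in T, S.indicator g x ∂μ :=
        setIntegral_mono hg.integrableOn hgS.integrableOn hg_le
    _ ≤ ∫ x, S.indicator g x ∂μ :=
        setIntegral_le_integral hgS (Filter.Eventually.of_forall (S.indicator_nonneg hg_pos))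
    _ = ∫ x in S, g x ∂μ := integral_indicator hS

theorem unfairness_eq_zero_of_rates_eq {Ω : Type*} [MeasurableSpace Ω] (ν : Measure Ω)
    (f : Bool → Bool → Ω → ℝ) (T : Set Ω) (htpr : tprOf ν f false T = tprOf ν f true T)
    (htnr : tnrOf ν f false T = tnrOf ν f true T) :
    unfairness ν f T = 0 := by
  simp [unfairness, htpr, htnr]

section Bayes

variable {Ω : Type*} (f : Bool → Bool → Ω → ℝ) (p : Bool → Bool → ℝ)

/-- Twice the pointwise gain in accuracy from predicting `1` rather than `0` at `x`. -/
def bayesMargin (x : Ω) : ℝ :=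
  ∑ a, (p a true * f a true x - p a false * f a false x)

theorem integrable_bayesMargin [MeasurableSpace Ω] {ν : Measure Ω}
    (hf_int : ∀ a y, Integrable (f a y) ν) : Integrable (bayesMargin f p) ν :=
  integrable_finsetSum _ fun a _ =>
    ((hf_int a true).const_mul _).sub ((hf_int a false).const_mul _)

theorem accuracy_eq_half_add_setIntegral_bayesMargin [MeasurableSpace Ω] (ν : Measure Ω)
    {T : Set Ω} (hT : MeasurableSet T) (hf_int : ∀ a y, Integrable (f a y) ν)
    (hf_one : ∀ a, ∫ x, f a false x ∂ν = 1) :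
    accuracy ν f p T =
      (p false false + p true false) / 2 + (∫ x in T, bayesMargin f p x ∂ν) / 2 := by
  have hint : ∀ a y (c : ℝ), IntegrableOn (fun x => c * f a y x) T ν :=
    fun a y c => ((hf_int a y).const_mul c).integrableOn
  have hdiff :
      ∀ a, IntegrableOn (fun x => p a true * f a true x - p a false * f a false x) T ν :=
    fun a => (hint a true _).sub (hint a false _)
  simp only [bayesMargin]
  rw [integral_finsetSum _ fun a _ => hdiff a]
  simp only [Fintype.sum_bool, integral_sub (hint _ _ _) (hint _ _ _), integral_const_mul,
    accuracy, setIntegral_compl hT (hf_int _ _), hf_one]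
  ring

theorem bayesMargin_nonneg_of_forall_le {x : Ω}
    (hx : ∀ a, p a false * f a false x ≤ p a true * f a true x) : 0 ≤ bayesMargin f p x :=
  Finset.sum_nonneg fun a _ => sub_nonneg.mpr (hx a)

theorem bayesMargin_nonpos_of_forall_lt {x : Ω}
    (hx : ∀ a, p a true * f a true x < p a false * f a false x) : bayesMargin f p x ≤ 0 :=
  Finset.sum_nonpos fun a _ => (sub_neg.mpr (hx a)).le

end Bayes

theorem identical_bayes_classifiers_eliminate_tradeoff_general
    {Ω : Type*} [MeasurableSpace Ω] (ν : Measure Ω)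
    (f : Bool → Bool → Ω → ℝ) (p : Bool → Bool → ℝ)
    (hf_meas : ∀ a y, Measurable (f a y))
    (hf_int : ∀ a y, Integrable (f a y) ν)
    (hf_one : ∀ a y, ∫ x, f a y x ∂ν = 1)
    (Tstar : Bool → Set Ω)
    (hTstar : ∀ a, Tstar a = {x | p a false * f a false x ≤ p a true * f a true x})
    (That : Set Ω) (hhat0 : Tstar false = That) (hhat1 : Tstar true = That)
    (hDU_tpr : tprOf ν f false (Tstar false) = tprOf ν f true (Tstar true))
    (hDU_tnr : tnrOf ν f false (Tstar false) = tnrOf ν f true (Tstar true)) :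
    unfairness ν f That = 0 ∧
      ∀ T : Set Ω, MeasurableSet T → accuracy ν f p T ≤ accuracy ν f p That := by
  have hBayes : ∀ a, That = {x | p a false * f a false x ≤ p a true * f a true x}
    | false => hhat0.symm.trans (hTstar false)
    | true => hhat1.symm.trans (hTstar true)
  have hThat : MeasurableSet That := by
    rw [hBayes false]
    exact measurableSet_le ((hf_meas _ _).const_mul _) ((hf_meas _ _).const_mul _)
  rw [hhat0, hhat1] at hDU_tpr hDU_tnr
  refine ⟨unfairness_eq_zero_of_rates_eq ν f That hDU_tpr hDU_tnr, fun T hT => ?_⟩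
  have hmax : ∫ x in T, bayesMargin f p x ∂ν ≤ ∫ x in That, bayesMargin f p x ∂ν := by
    refine setIntegral_le_setIntegral_of_nonneg_of_nonpos_compl T
      (integrable_bayesMargin f p hf_int) hThat
      (fun x hx => bayesMargin_nonneg_of_forall_le f p fun a => ?_)
      (fun x hx => bayesMargin_nonpos_of_forall_lt f p fun a => ?_)
    · rwa [hBayes a] at hx
    · rw [hBayes a] at hx
      exact not_le.mp hx
  have hf_one' : ∀ a, ∫ x, f a false x ∂ν = 1 := fun a => hf_one a false
  rw [accuracy_eq_half_add_setIntegral_bayesMargin f p ν hT hf_int hf_one',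
    accuracy_eq_half_add_setIntegral_bayesMargin f p ν hThat hf_int hf_one']
  linarith

/-- If the two group Bayes classifiers coincide (`T*_0 = T*_1 = T̂`) and the data
unfairness vanishes (`TPR₀(T*_0) = TPR₁(T*_1)` and `TNR₀(T*_0) = TNR₁(T*_1)`),
then `T̂` achieves complete fairness (`F_U(T̂) = 0`) and maximal accuracy. -/
theorem identical_bayes_classifiers_eliminate_tradeoff
    {Ω : Type*} [MeasurableSpace Ω] (ν : Measure Ω) [SigmaFinite ν]
    (f : Bool → Bool → Ω → ℝ) (p : Bool → Bool → ℝ)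
    (hf_meas : ∀ a y, Measurable (f a y))
    (hf_nonneg : ∀ a y x, 0 ≤ f a y x)
    (hf_int : ∀ a y, Integrable (f a y) ν)
    (hf_one : ∀ a y, ∫ x, f a y x ∂ν = 1)
    (hp_pos : ∀ a y, 0 < p a y)
    (hp_sum : p false false + p false true + p true false + p true true = 1)
    (Tstar : Bool → Set Ω)
    (hTstar : ∀ a, Tstar a = {x | p a false * f a false x ≤ p a true * f a true x})
    (That : Set Ω) (hhat0 : Tstar false = That) (hhat1 : Tstar true = That)
    (hDU_tpr : tprOf ν f false (Tstar false) = tprOf ν f true (Tstar true))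
    (hDU_tnr : tnrOf ν f false (Tstar false) = tnrOf ν f true (Tstar true)) :
    unfairness ν f That = 0 ∧
      ∀ T : Set Ω, MeasurableSet T → accuracy ν f p T ≤ accuracy ν f p That :=
  identical_bayes_classifiers_eliminate_tradeoff_general ν f p hf_meas hf_int hf_one Tstar hTstar
    That hhat0 hhat1 hDU_tpr hDU_tnr
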